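/- arXiv:1611.05556 — 2 statements merged into one kernel-verified Lean document; each statement's English description precedes it below -/
import Mathlib

section
/- Let n be a positive integer, P an n×n real matrix, λ > 0, and Q = λ • (P - I), where I is the n×n identity matrix. Then for every t ≥ 0 and all indices i, j, the (i,j) entry of exp(t • Q) equals the sum over n ∈ ℕ of exp(-λ·t) · ((λ·t)^n / n!) · (P^n)_{i,j}. -/
/-!
The scalar part `-λt • 1` of `tQ = λt • P - λt • 1` is central, so `exp (tQ) = e^{-λt} exp (λt • P)`,
and the exponential series of `λt • P` converges entrywise to `exp (λt • P)`.
-/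

open Matrix

open NormedSpace Nat

theorem NormedSpace.exp_smul_sub_one {𝔸 : Type*} [NormedRing 𝔸] [NormedAlgebra ℝ 𝔸]
    [CompleteSpace 𝔸] (c : ℝ) (a : 𝔸) :
    exp (c • (a - 1)) = Real.exp (-c) • exp (c • a) := by
  have hsplit : c • (a - 1) = c • a + algebraMap ℝ 𝔸 (-c) := by
    rw [smul_sub, map_neg, Algebra.algebraMap_eq_smul_one, sub_eq_add_neg]
  let +nondep : NormedAlgebra ℚ 𝔸 := NormedAlgebra.restrictScalars ℚ ℝ 𝔸
  rw [hsplit, exp_add_of_commute (Algebra.commutes _ _).symm, ← algebraMap_exp_comm,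
    ← Real.exp_eq_exp_ℝ, ← Algebra.commutes, ← Algebra.smul_def]

theorem Matrix.exp_smul_sub_one {m : Type*} [Fintype m] [DecidableEq m] (c : ℝ)
    (P : Matrix m m ℝ) : exp (c • (P - 1)) = Real.exp (-c) • exp (c • P) := by
  open scoped Norms.Operator in
  exact NormedSpace.exp_smul_sub_one c P

theorem Matrix.hasSum_exp_apply {m 𝕂 : Type*} [Fintype m] [DecidableEq m] [RCLike 𝕂]
    (A : Matrix m m 𝕂) (i j : m) :
    HasSum (fun k : ℕ => (k !⁻¹ : 𝕂) * (A ^ k) i j) (exp A i j) := by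
  open scoped Norms.Operator in
  exact Pi.hasSum.mp (Pi.hasSum.mp (exp_series_hasSum_exp' (𝕂 := 𝕂) A) i) j

theorem uniformization_series_general
    (n : ℕ) (P : Matrix (Fin n) (Fin n) ℝ)
    (lam : ℝ)
    (Q : Matrix (Fin n) (Fin n) ℝ) (hQ : Q = lam • (P - 1)) :
    ∀ t : ℝ, 0 ≤ t → ∀ i j : Fin n,
      NormedSpace.exp (t • Q) i j
        = ∑' k : ℕ,
            Real.exp (-lam * t) * ((lam * t) ^ k / (Nat.factorial k)) * (P ^ k) i j := by
  intro t _ i j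
  have hexp : exp (t • Q) = Real.exp (-(lam * t)) • exp ((lam * t) • P) := by
    rw [hQ, smul_smul, mul_comm t lam, Matrix.exp_smul_sub_one]
  have hsum := ((lam * t) • P).hasSum_exp_apply i j |>.mul_left (Real.exp (-(lam * t)))
  rw [hexp, Matrix.smul_apply, smul_eq_mul, ← hsum.tsum_eq]
  refine tsum_congr fun k => ?_
  rw [smul_pow, Matrix.smul_apply, smul_eq_mul, neg_mul]
  ring

theorem uniformization_series
    (n : ℕ) (hn : 0 < n) (P : Matrix (Fin n) (Fin n) ℝ)
    (lam : ℝ) (hlam : 0 < lam)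
    (Q : Matrix (Fin n) (Fin n) ℝ) (hQ : Q = lam • (P - 1)) :
    ∀ t : ℝ, 0 ≤ t → ∀ i j : Fin n,
      NormedSpace.exp (t • Q) i j
        = ∑' k : ℕ,
            Real.exp (-lam * t) * ((lam * t) ^ k / (Nat.factorial k)) * (P ^ k) i j :=
  uniformization_series_general n P lam Q hQ
end

section
/- Let n be a positive integer, λ > 0, and let P be an n×n real matrix that is row-stochastic, i.e., all entries of P are nonnegative and every row of P sums to 1. Then for every t ≥ 0, the matrix exp(t·λ • (P - I)) is row-stochastic: all its entries are nonnegative and each of its rows sums to 1. -/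
open Matrix

/-!
The generator `Q = λt (P - 1)` has nonnegative off-diagonal entries, so `Q + c` is entrywise
nonnegative for a large scalar `c`, and `exp Q = e⁻ᶜ exp (Q + c)` is then a power series with
nonnegative terms. Row sums are preserved because `Q` annihilates the all-ones vector, so every
term but the constant one of the series for `exp Q *ᵥ 1` vanishes.
-/

namespace Matrix

attribute [local instance] Matrix.linftyOpNormedAddCommGroup Matrix.linftyOpNormedRing
  Matrix.linftyOpNormedAlgebra

open scoped Nat
open NormedSpace

variable {ι : Type*} [Fintype ι] [DecidableEq ι]

theorem hasSum_exp_apply_s8 (A : Matrix ι ι ℝ) (i j : ι) :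
    HasSum (fun k ↦ (k !⁻¹ : ℝ) * (A ^ k) i j) (exp A i j) :=
  Pi.hasSum.1 (Pi.hasSum.1 (exp_series_hasSum_exp' (𝕂 := ℝ) A) i) j

theorem exp_apply_nonneg {A : Matrix ι ι ℝ} (hA : ∀ i j, 0 ≤ A i j) (i j : ι) :
    0 ≤ exp A i j :=
  (hasSum_exp_apply_s8 A i j).nonneg fun k ↦ mul_nonneg (by positivity) (pow_apply_nonneg hA k i j)

theorem exp_add_algebraMap (A : Matrix ι ι ℝ) (c : ℝ) :
    exp (A + algebraMap ℝ _ c) = Real.exp c • exp A := by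
  have hc : exp (algebraMap ℝ (Matrix ι ι ℝ) c) = algebraMap ℝ _ (Real.exp c) := by
    rw [Real.exp_eq_exp_ℝ]
    exact (algebraMap_exp_comm c).symm
  rw [exp_add_of_commute _ _ (Algebra.commutes c A).symm, hc, ← Algebra.commutes,
    Algebra.smul_def]

theorem exp_apply_nonneg_of_offDiag_nonneg {A : Matrix ι ι ℝ}
    (hA : ∀ i j, i ≠ j → 0 ≤ A i j) (i j : ι) : 0 ≤ exp A i j := by
  set c := ∑ k, |A k k|
  have hshift : ∀ k l, 0 ≤ (A + algebraMap ℝ _ c) k l := by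
    intro k l
    rcases eq_or_ne k l with rfl | hkl
    · have hc : |A k k| ≤ c := Finset.single_le_sum (f := fun k ↦ |A k k|)
        (fun _ _ ↦ abs_nonneg _) (Finset.mem_univ k)
      simp only [add_apply, algebraMap_eq_diagonal, Pi.algebraMap_apply, diagonal_apply_eq,
        Algebra.algebraMap_self, RingHom.id_apply]
      linarith [neg_abs_le (A k k)]
    · simpa [algebraMap_eq_diagonal, diagonal_apply_ne _ hkl] using hA k l hkl
  have hexp := exp_apply_nonneg hshift i j
  rw [exp_add_algebraMap, smul_apply, smul_eq_mul] at hexp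
  exact nonneg_of_mul_nonneg_right hexp (Real.exp_pos c)

theorem exp_mulVec_of_mulVec_eq_zero {A : Matrix ι ι ℝ} {v : ι → ℝ} (hv : A *ᵥ v = 0) :
    exp A *ᵥ v = v := by
  have hpow : ∀ k, ((k ! : ℝ)⁻¹ • A ^ k) *ᵥ v = if k = 0 then v else 0 := by
    rintro (_ | k)
    · simp
    · rw [smul_mulVec, pow_succ, ← mulVec_mulVec, hv, mulVec_zero, smul_zero,
        if_neg k.succ_ne_zero]
  have hcont : Continuous (mulVec.addMonoidHomLeft (m := ι) v) :=
    continuous_id.matrix_mulVec continuous_const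
  have hsum : HasSum (fun k ↦ ((k ! : ℝ)⁻¹ • A ^ k) *ᵥ v) (exp A *ᵥ v) :=
    (exp_series_hasSum_exp' (𝕂 := ℝ) A).map (mulVec.addMonoidHomLeft v) hcont
  rw [funext hpow] at hsum
  exact hsum.unique (hasSum_ite_eq 0 v)

end Matrix

theorem exp_of_uniformized_generator_is_row_stochastic_general
    (n : ℕ) (lam : ℝ) (hlam : 0 < lam)
    (P : Matrix (Fin n) (Fin n) ℝ)
    (hPnonneg : ∀ i j, 0 ≤ P i j)
    (hProw : ∀ i, ∑ j, P i j = 1) :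
    ∀ t : ℝ, 0 ≤ t →
      (∀ i j, 0 ≤ NormedSpace.exp ((t * lam) • (P - 1)) i j) ∧
        (∀ i, ∑ j, NormedSpace.exp ((t * lam) • (P - 1)) i j = 1) := by
  intro t ht
  set Q := (t * lam) • (P - 1)
  have hQ_offDiag : ∀ i j, i ≠ j → 0 ≤ Q i j := fun i j hij ↦ by
    simpa [Q, one_apply_ne hij] using mul_nonneg (mul_nonneg ht hlam.le) (hPnonneg i j)
  have hP_rowSum : P *ᵥ 1 = 1 := funext fun i ↦ by simpa [mulVec, dotProduct] using hProw i
  have hQ_rowSum : Q *ᵥ 1 = 0 := by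
    rw [smul_mulVec, sub_mulVec, hP_rowSum, one_mulVec, sub_self, smul_zero]
  refine ⟨exp_apply_nonneg_of_offDiag_nonneg hQ_offDiag, fun i ↦ ?_⟩
  simpa [mulVec, dotProduct] using congr_fun (exp_mulVec_of_mulVec_eq_zero hQ_rowSum) i

theorem exp_of_uniformized_generator_is_row_stochastic
    (n : ℕ) (hn : 0 < n) (lam : ℝ) (hlam : 0 < lam)
    (P : Matrix (Fin n) (Fin n) ℝ)
    (hPnonneg : ∀ i j, 0 ≤ P i j)
    (hProw : ∀ i, ∑ j, P i j = 1) :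
    ∀ t : ℝ, 0 ≤ t →
      (∀ i j, 0 ≤ NormedSpace.exp ((t * lam) • (P - 1)) i j) ∧
        (∀ i, ∑ j, NormedSpace.exp ((t * lam) • (P - 1)) i j = 1) :=
  exp_of_uniformized_generator_is_row_stochastic_general n lam hlam P hPnonneg hProw
end
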